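/- arXiv:2305.15538 — 2 statements merged into one kernel-verified Lean document; each statement's English description precedes it below -/
import Mathlib

section
/- Let λ* ∈ ℝ^K be a global minimizer over ℝ^K of the dual objective λ ↦ f(λ) + γ‖λ‖₁ (where ‖λ‖₁ = Σ_k |λ_k|). Then the tilted pmf P_{λ*} is feasible, and it is the unique minimizer of D(P‖P_syn) over all feasible pmfs P on X; i.e., for every feasible pmf P, D(P‖P_syn) ≥ D(P_{λ*}‖P_syn), with equality if and only if P = P_{λ*}. -/
open Finset

noncomputable section

/-- `P` is a probability mass function on the finite set `X`. -/
def IsPMF {X : Type*} [Fintype X] (P : X → ℝ) : Prop :=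
  (∀ x, 0 ≤ P x) ∧ ∑ x, P x = 1

/-- The value of query `q` under a pmf `P`. -/
def queryVal {X : Type*} [Fintype X] (P : X → ℝ) (q : X → ℝ) : ℝ :=
  ∑ x, P x * q x

/-- `P` is feasible: all query answers are within `γ` of the targets `a`. -/
def Feasible {X : Type*} [Fintype X] {K : ℕ} (q : Fin K → X → ℝ) (a : Fin K → ℝ)
    (γ : ℝ) (P : X → ℝ) : Prop :=
  ∀ k : Fin K, |queryVal P (q k) - a k| ≤ γ

/-- KL divergence between pmfs on a finite set (with the convention `0 log 0 = 0`,
which holds automatically since `Real.log 0 = 0`). -/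
def KLdiv {X : Type*} [Fintype X] (P Q : X → ℝ) : ℝ :=
  ∑ x, P x * Real.log (P x / Q x)

/-- The log-partition part of the dual objective. -/
def dualF {X : Type*} [Fintype X] {K : ℕ} (Psyn : X → ℝ) (q : Fin K → X → ℝ)
    (a : Fin K → ℝ) (lam : Fin K → ℝ) : ℝ :=
  Real.log (∑ x, Psyn x * Real.exp (-∑ k, lam k * (q k x - a k)))

/-- The partition function of the tilted distribution. -/
def Zfun {X : Type*} [Fintype X] {K : ℕ} (Psyn : X → ℝ) (q : Fin K → X → ℝ)
    (a : Fin K → ℝ) (lam : Fin K → ℝ) : ℝ :=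
  ∑ x, Psyn x * Real.exp (-∑ k, lam k * (q k x - a k))

/-- The exponentially tilted pmf `P_λ`. -/
def tilt {X : Type*} [Fintype X] {K : ℕ} (Psyn : X → ℝ) (q : Fin K → X → ℝ)
    (a : Fin K → ℝ) (lam : Fin K → ℝ) (x : X) : ℝ :=
  Psyn x * Real.exp (-∑ k, lam k * (q k x - a k)) / Zfun Psyn q a lam

/-!
Minimizing `f + γ‖·‖₁` along each coordinate axis yields the KKT conditions at `λ*`: the partial
derivative `∂ₖf(λ*) = a_k - q_k(P_{λ*})` lies in `[-γ, γ]`, and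
`λ*_k (q_k(P_{λ*}) - a_k) = γ |λ*_k|`. Since `log (P_λ / P_syn)` is affine in the queries,
`D(P‖P_syn) = D(P‖P_λ) - f(λ) - Σₖ λ_k (q_k(P) - a_k)` for every pmf `P`. For feasible `P` the last
sum is at most `γ‖λ*‖₁`, which by complementary slackness is its value at `P_{λ*}`; this is the
Pythagorean inequality `D(P‖P_{λ*}) + D(P_{λ*}‖P_syn) ≤ D(P‖P_syn)`, and Gibbs' inequality
`D(P‖P_{λ*}) ≥ 0`, with equality only at `P = P_{λ*}`, concludes.
-/

open Real Set InformationTheory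

section Calculus

variable {F : ℝ → ℝ} {L a : ℝ}

lemma HasDerivAt.nonneg_of_isMinOn_Ici (hF : HasDerivAt F L a) (h : IsMinOn F (Ici a) a) :
    0 ≤ L := by
  have hone : (1 : ℝ) ∈ posTangentConeAt (Ici a) a :=
    one_mem_posTangentConeAt_iff_frequently.2
      (eventually_nhdsWithin_of_forall (s := Ioi a) fun _ hx => Set.mem_Ici.2 hx.le).frequently
  simpa using h.localize.hasFDerivWithinAt_nonneg hF.hasDerivWithinAt.hasFDerivWithinAt hone

lemma HasDerivAt.nonpos_of_isMinOn_Iic (hF : HasDerivAt F L a) (h : IsMinOn F (Iic a) a) :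
    L ≤ 0 := by
  have hneg : (-1 : ℝ) ∈ posTangentConeAt (Iic a) a :=
    mem_posTangentConeAt_of_segment_subset
      ((convex_Iic a).segment_subset (le_refl a) (by simp))
  simpa using h.localize.hasFDerivWithinAt_nonneg hF.hasDerivWithinAt.hasFDerivWithinAt hneg

lemma HasDerivAt.abs_le_and_mul_eq_of_min_add_abs {γ c : ℝ} (hγ : 0 ≤ γ)
    (hF : HasDerivAt F L 0) (hmin : ∀ t, F 0 + γ * |c| ≤ F t + γ * |c + t|) :
    |L| ≤ γ ∧ c * L = -(γ * |c|) := by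
  have hplus : HasDerivAt (fun t => F t + γ * t) (L + γ) 0 := by
    simpa using hF.fun_add ((hasDerivAt_id' 0).const_mul γ)
  have hminus : HasDerivAt (fun t => F t - γ * t) (L - γ) 0 := by
    simpa using hF.fun_sub ((hasDerivAt_id' 0).const_mul γ)
  have hright : 0 ≤ L + γ := hplus.nonneg_of_isMinOn_Ici fun t (ht : 0 ≤ t) => by
    have := mul_le_mul_of_nonneg_left ((abs_add_le c t).trans_eq (by rw [abs_of_nonneg ht])) hγ
    simpa using (by linarith [hmin t] : F 0 ≤ F t + γ * t)
  have hleft : L - γ ≤ 0 := hminus.nonpos_of_isMinOn_Iic fun t (ht : t ≤ 0) => by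
    have := mul_le_mul_of_nonneg_left ((abs_add_le c t).trans_eq (by rw [abs_of_nonpos ht])) hγ
    simpa using (by linarith [hmin t] : F 0 ≤ F t - γ * t)
  refine ⟨abs_le.2 ⟨by linarith, by linarith⟩, ?_⟩
  -- For `c ≠ 0` the penalty `γ |c + t|` is affine near `t = 0`, so Fermat's theorem applies.
  rcases lt_trichotomy c 0 with hc | rfl | hc
  · have hlocal : IsLocalMin (fun t => F t - γ * t) 0 := by
      filter_upwards [eventually_lt_nhds (neg_pos.2 hc)] with t ht
      have := hmin t
      rw [abs_of_neg hc, abs_of_neg (by linarith)] at this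
      linarith
    rw [abs_of_neg hc, sub_eq_zero.1 (hlocal.hasDerivAt_eq_zero hminus)]
    ring
  · simp
  · have hlocal : IsLocalMin (fun t => F t + γ * t) 0 := by
      filter_upwards [eventually_gt_nhds (neg_neg_of_pos hc)] with t ht
      have := hmin t
      rw [abs_of_pos hc, abs_of_pos (by linarith)] at this
      linarith
    rw [abs_of_pos hc, eq_neg_of_add_eq_zero_left (hlocal.hasDerivAt_eq_zero hplus)]
    ring

end Calculus

section Divergence

variable {X : Type*} [Fintype X] {P Q R : X → ℝ}

lemma KLdiv_eq_sum_klFun (hQ : ∀ x, 0 < Q x) (hsum : ∑ x, P x = ∑ x, Q x) :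
    KLdiv P Q = ∑ x, Q x * klFun (P x / Q x) := by
  have hterm : ∀ x, Q x * klFun (P x / Q x) = P x * log (P x / Q x) + (Q x - P x) := by
    intro x
    rw [klFun_apply]
    field_simp [(hQ x).ne']
    ring
  rw [sum_congr rfl fun x _ => hterm x, sum_add_distrib, sum_sub_distrib, hsum, sub_self,
    add_zero, KLdiv]

lemma KLdiv_nonneg (hP : ∀ x, 0 ≤ P x) (hQ : ∀ x, 0 < Q x) (hsum : ∑ x, P x = ∑ x, Q x) :
    0 ≤ KLdiv P Q := by
  rw [KLdiv_eq_sum_klFun hQ hsum]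
  exact sum_nonneg fun x _ => mul_nonneg (hQ x).le (klFun_nonneg (div_nonneg (hP x) (hQ x).le))

lemma KLdiv_eq_zero_iff (hP : ∀ x, 0 ≤ P x) (hQ : ∀ x, 0 < Q x)
    (hsum : ∑ x, P x = ∑ x, Q x) : KLdiv P Q = 0 ↔ P = Q := by
  have hnonneg : ∀ x, 0 ≤ klFun (P x / Q x) := fun x =>
    klFun_nonneg (div_nonneg (hP x) (hQ x).le)
  rw [KLdiv_eq_sum_klFun hQ hsum,
    sum_eq_zero_iff_of_nonneg fun x _ => mul_nonneg (hQ x).le (hnonneg x), funext_iff]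
  refine forall_congr' fun x => ?_
  rw [mul_eq_zero, or_iff_right (hQ x).ne', klFun_eq_zero_iff (div_nonneg (hP x) (hQ x).le),
    div_eq_one_iff_eq (hQ x).ne']
  simp

lemma KLdiv_eq_KLdiv_add_sum_mul_log (P : X → ℝ) (hQ : ∀ x, Q x ≠ 0) (hR : ∀ x, R x ≠ 0) :
    KLdiv P R = KLdiv P Q + ∑ x, P x * log (Q x / R x) := by
  rw [KLdiv, KLdiv, ← sum_add_distrib]
  refine sum_congr rfl fun x _ => ?_
  rcases eq_or_ne (P x) 0 with hPx | hPx
  · simp [hPx]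
  · rw [← mul_add, ← log_mul (div_ne_zero hPx (hQ x)) (div_ne_zero (hQ x) (hR x)),
      div_mul_div_cancel₀ (hQ x)]

lemma sum_mul_sub_eq_queryVal_sub (hP : ∑ x, P x = 1) (g : X → ℝ) (c : ℝ) :
    ∑ x, P x * (g x - c) = queryVal P g - c := by
  simp only [mul_sub, sum_sub_distrib, ← sum_mul, hP, one_mul, queryVal]

lemma sum_mul_sum_eq_sum_queryVal_sub {K : ℕ} (hP : ∑ x, P x = 1) (q : Fin K → X → ℝ)
    (a lam : Fin K → ℝ) :
    ∑ x, P x * ∑ k, lam k * (q k x - a k) = ∑ k, lam k * (queryVal P (q k) - a k) := by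
  simp_rw [mul_sum, mul_left_comm (P _)]
  rw [sum_comm]
  simp_rw [← mul_sum, sum_mul_sub_eq_queryVal_sub hP]

end Divergence

lemma sum_abs_add_smul_single {K : ℕ} (lam : Fin K → ℝ) (k : Fin K) (t : ℝ) :
    ∑ j, |(lam + t • Pi.single k 1 : Fin K → ℝ) j| = ∑ j, |lam j| + (|lam k + t| - |lam k|) := by
  rw [← sub_eq_iff_eq_add', ← sum_sub_distrib]
  calc ∑ j, (|(lam + t • Pi.single k 1 : Fin K → ℝ) j| - |lam j|)
      = ∑ j, Pi.single k (|lam k + t| - |lam k|) j := by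
        refine sum_congr rfl fun j _ => ?_
        rcases eq_or_ne j k with rfl | hj
        · simp
        · simp [hj]
    _ = |lam k + t| - |lam k| := by simp

section Tilt

variable {X : Type*} [Fintype X] [Nonempty X] {K : ℕ} {Psyn : X → ℝ} {q : Fin K → X → ℝ}
  {a : Fin K → ℝ} {γ : ℝ}

lemma Zfun_pos (hpos : ∀ x, 0 < Psyn x) (lam : Fin K → ℝ) : 0 < Zfun Psyn q a lam :=
  sum_pos (fun x _ => mul_pos (hpos x) (exp_pos _)) univ_nonempty

lemma tilt_pos (hpos : ∀ x, 0 < Psyn x) (lam : Fin K → ℝ) (x : X) :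
    0 < tilt Psyn q a lam x :=
  div_pos (mul_pos (hpos x) (exp_pos _)) (Zfun_pos hpos lam)

lemma isPMF_tilt (hpos : ∀ x, 0 < Psyn x) (lam : Fin K → ℝ) : IsPMF (tilt Psyn q a lam) :=
  ⟨fun x => (tilt_pos hpos lam x).le, by
    unfold tilt
    rw [← sum_div]
    exact div_self (Zfun_pos hpos lam).ne'⟩

lemma log_tilt_div (hpos : ∀ x, 0 < Psyn x) (lam : Fin K → ℝ) (x : X) :
    log (tilt Psyn q a lam x / Psyn x) = -∑ k, lam k * (q k x - a k) - dualF Psyn q a lam := by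
  have hratio : tilt Psyn q a lam x / Psyn x =
      exp (-∑ k, lam k * (q k x - a k)) / Zfun Psyn q a lam := by
    rw [tilt]
    field_simp [(hpos x).ne']
  rw [hratio, log_div (exp_pos _).ne' (Zfun_pos hpos lam).ne', log_exp, dualF, Zfun]

lemma sum_mul_log_tilt_div (hpos : ∀ x, 0 < Psyn x) (lam : Fin K → ℝ) {P : X → ℝ}
    (hP : ∑ x, P x = 1) :
    ∑ x, P x * log (tilt Psyn q a lam x / Psyn x) =
      -∑ k, lam k * (queryVal P (q k) - a k) - dualF Psyn q a lam := by
  calc ∑ x, P x * log (tilt Psyn q a lam x / Psyn x)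
      = ∑ x, (-(P x * ∑ k, lam k * (q k x - a k)) - P x * dualF Psyn q a lam) :=
        sum_congr rfl fun x _ => by rw [log_tilt_div hpos]; ring
    _ = _ := by
        rw [sum_sub_distrib, sum_neg_distrib, sum_mul_sum_eq_sum_queryVal_sub hP, ← sum_mul, hP,
          one_mul]

lemma hasDerivAt_dualF_add_smul (hpos : ∀ x, 0 < Psyn x) (lam μ : Fin K → ℝ) :
    HasDerivAt (fun t : ℝ => dualF Psyn q a (lam + t • μ))
      (-∑ k, μ k * (queryVal (tilt Psyn q a lam) (q k) - a k)) 0 := by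
  set S : X → ℝ := fun x => ∑ k, lam k * (q k x - a k)
  set T : X → ℝ := fun x => ∑ k, μ k * (q k x - a k)
  have hline : ∀ t : ℝ, dualF Psyn q a (lam + t • μ) =
      log (∑ x, Psyn x * exp (-S x - t * T x)) := fun t => by
    simp only [dualF, S, T, Pi.add_apply, Pi.smul_apply, smul_eq_mul, add_mul, sum_add_distrib,
      mul_sum, mul_assoc, neg_add, sub_eq_add_neg]
  have hZ : HasDerivAt (fun t : ℝ => ∑ x, Psyn x * exp (-S x - t * T x))
      (∑ x, Psyn x * exp (-S x) * -T x) 0 := by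
    refine HasDerivAt.fun_sum fun x _ => ?_
    simpa [mul_assoc] using
      ((((hasDerivAt_id' (0 : ℝ)).mul_const (T x)).const_sub (-S x)).exp).const_mul (Psyn x)
  have hZ0 : ∑ x, Psyn x * exp (-S x - 0 * T x) = Zfun Psyn q a lam := by simp [Zfun, S]
  have hderiv : (∑ x, Psyn x * exp (-S x) * -T x) / Zfun Psyn q a lam =
      -∑ k, μ k * (queryVal (tilt Psyn q a lam) (q k) - a k) := by
    rw [← sum_mul_sum_eq_sum_queryVal_sub (isPMF_tilt hpos lam).2, ← sum_neg_distrib, sum_div]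
    refine sum_congr rfl fun x _ => ?_
    rw [tilt]
    ring
  simp_rw [hline]
  convert hZ.log (hZ0 ▸ (Zfun_pos hpos lam).ne') using 1
  rw [hZ0, hderiv]

theorem dual_minimizer_kkt (hpos : ∀ x, 0 < Psyn x) (hγ : 0 ≤ γ) {lamStar : Fin K → ℝ}
    (hmin : ∀ lam : Fin K → ℝ,
      dualF Psyn q a lamStar + γ * ∑ k, |lamStar k| ≤ dualF Psyn q a lam + γ * ∑ k, |lam k|)
    (k : Fin K) :
    |queryVal (tilt Psyn q a lamStar) (q k) - a k| ≤ γ ∧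
      lamStar k * (queryVal (tilt Psyn q a lamStar) (q k) - a k) = γ * |lamStar k| := by
  set F : ℝ → ℝ := fun t => dualF Psyn q a (lamStar + t • Pi.single k 1)
  have hF : HasDerivAt F (-(queryVal (tilt Psyn q a lamStar) (q k) - a k)) 0 := by
    simpa [Pi.single_apply] using hasDerivAt_dualF_add_smul hpos lamStar (Pi.single k 1)
  have hFmin : ∀ t, F 0 + γ * |lamStar k| ≤ F t + γ * |lamStar k + t| := fun t => by
    have := hmin (lamStar + t • Pi.single k 1)
    rw [sum_abs_add_smul_single] at this
    simp only [F, zero_smul, add_zero]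
    linarith
  obtain ⟨hfeas, hslack⟩ := hF.abs_le_and_mul_eq_of_min_add_abs hγ hFmin
  exact ⟨by rwa [abs_neg] at hfeas, by linarith⟩

theorem KLdiv_add_KLdiv_tilt_le (hpos : ∀ x, 0 < Psyn x) {lam : Fin K → ℝ}
    (hslack : ∀ k, lam k * (queryVal (tilt Psyn q a lam) (q k) - a k) = γ * |lam k|)
    {P : X → ℝ} (hP : IsPMF P) (hfeas : Feasible q a γ P) :
    KLdiv P (tilt Psyn q a lam) + KLdiv (tilt Psyn q a lam) Psyn ≤ KLdiv P Psyn := by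
  have htilt := isPMF_tilt (q := q) (a := a) hpos lam
  have htilt_ne : ∀ x, tilt Psyn q a lam x ≠ 0 := fun x => (tilt_pos hpos lam x).ne'
  have hself : KLdiv (tilt Psyn q a lam) (tilt Psyn q a lam) = 0 :=
    (KLdiv_eq_zero_iff htilt.1 (tilt_pos hpos lam) rfl).2 rfl
  have hlin : ∑ k, lam k * (queryVal P (q k) - a k) ≤
      ∑ k, lam k * (queryVal (tilt Psyn q a lam) (q k) - a k) := by
    simp_rw [hslack]
    refine sum_le_sum fun k _ => ?_
    calc lam k * (queryVal P (q k) - a k) ≤ |lam k| * |queryVal P (q k) - a k| :=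
          (le_abs_self _).trans (abs_mul _ _).le
      _ ≤ |lam k| * γ := mul_le_mul_of_nonneg_left (hfeas k) (abs_nonneg _)
      _ = γ * |lam k| := mul_comm _ _
  rw [KLdiv_eq_KLdiv_add_sum_mul_log P htilt_ne fun x => (hpos x).ne',
    KLdiv_eq_KLdiv_add_sum_mul_log (tilt Psyn q a lam) htilt_ne fun x => (hpos x).ne', hself,
    sum_mul_log_tilt_div hpos lam hP.2, sum_mul_log_tilt_div hpos lam htilt.2]
  linarith

end Tilt

theorem optimality_of_dual_minimizer_general
    {X : Type*} [Fintype X] [Nonempty X] {K : ℕ}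
    (Psyn : X → ℝ) (hpos : ∀ x, 0 < Psyn x)
    (q : Fin K → X → ℝ) (a : Fin K → ℝ) (γ : ℝ) (hγ : 0 ≤ γ)
    (lamStar : Fin K → ℝ)
    (hmin : ∀ lam : Fin K → ℝ,
      dualF Psyn q a lamStar + γ * ∑ k, |lamStar k| ≤
        dualF Psyn q a lam + γ * ∑ k, |lam k|) :
    Feasible q a γ (tilt Psyn q a lamStar) ∧
      ∀ P : X → ℝ, IsPMF P → Feasible q a γ P →
        KLdiv (tilt Psyn q a lamStar) Psyn ≤ KLdiv P Psyn ∧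
          (KLdiv P Psyn = KLdiv (tilt Psyn q a lamStar) Psyn ↔
            P = tilt Psyn q a lamStar) := by
  have hkkt := dual_minimizer_kkt hpos hγ hmin
  have htilt := isPMF_tilt (q := q) (a := a) hpos lamStar
  refine ⟨fun k => (hkkt k).1, fun P hP hfeas => ?_⟩
  have hpyth := KLdiv_add_KLdiv_tilt_le hpos (fun k => (hkkt k).2) hP hfeas
  have hsum : ∑ x, P x = ∑ x, tilt Psyn q a lamStar x := hP.2.trans htilt.2.symm
  have hgibbs := KLdiv_nonneg hP.1 (tilt_pos hpos lamStar) hsum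
  refine ⟨by linarith, fun heq => ?_, fun h => h ▸ rfl⟩
  exact (KLdiv_eq_zero_iff hP.1 (tilt_pos hpos lamStar) hsum).1 (by linarith)

/-- If `λ*` globally minimizes the dual objective `λ ↦ f(λ) + γ‖λ‖₁`, then the tilted pmf
`P_{λ*}` is feasible and is the unique minimizer of `D(P‖P_syn)` over feasible pmfs. -/
theorem optimality_of_dual_minimizer
    {X : Type*} [Fintype X] [Nonempty X] {K : ℕ}
    (Psyn : X → ℝ) (hPsyn : IsPMF Psyn) (hpos : ∀ x, 0 < Psyn x)
    (q : Fin K → X → ℝ) (a : Fin K → ℝ) (γ : ℝ) (hγ : 0 ≤ γ)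
    (lamStar : Fin K → ℝ)
    (hmin : ∀ lam : Fin K → ℝ,
      dualF Psyn q a lamStar + γ * ∑ k, |lamStar k| ≤
        dualF Psyn q a lam + γ * ∑ k, |lam k|) :
    Feasible q a γ (tilt Psyn q a lamStar) ∧
      ∀ P : X → ℝ, IsPMF P → Feasible q a γ P →
        KLdiv (tilt Psyn q a lamStar) Psyn ≤ KLdiv P Psyn ∧
          (KLdiv P Psyn = KLdiv (tilt Psyn q a lamStar) Psyn ↔
            P = tilt Psyn q a lamStar) :=
  optimality_of_dual_minimizer_general Psyn hpos q a γ hγ lamStar hmin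
end
end

section
/- Privacy of the Laplace mechanism: let Δ > 0, ε > 0, and b = Δ/ε. For t ∈ ℝ let Lap(t, b) denote the measure on ℝ with density x ↦ (2b)⁻¹ exp(−|x − t| / b) with respect to Lebesgue measure. Then for all t, t' ∈ ℝ with |t − t'| ≤ Δ and every Borel set A ⊆ ℝ, Lap(t, b)(A) ≤ e^ε · Lap(t', b)(A). -/
/-!
Moving the location from `t'` to `t` changes `|x - t|` by at most `|t - t'|`, so the ratio of
the two Laplace densities is at most `exp (|t - t'| / b)` everywhere. Integrating this pointwise
bound over any set gives the inequality, and `|t - t'| / b ≤ Δ / b = ε`.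
-/

open MeasureTheory

/-- The Laplace distribution on `ℝ` with location `t` and scale `b`, given by its density
`x ↦ (2b)⁻¹ exp(−|x − t|/b)` with respect to Lebesgue measure. -/
noncomputable def Lap (t b : ℝ) : Measure ℝ :=
  volume.withDensity fun x => ENNReal.ofReal ((2 * b)⁻¹ * Real.exp (-|x - t| / b))

open Real

lemma Real.exp_neg_abs_sub_div_le {b : ℝ} (hb : 0 < b) (x t t' : ℝ) :
    exp (-|x - t| / b) ≤ exp (|t - t'| / b) * exp (-|x - t'| / b) := by
  rw [← exp_add, exp_le_exp, ← add_div, div_le_div_iff_of_pos_right hb]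
  have h := abs_sub_abs_le_abs_sub (x - t') (x - t)
  rw [sub_sub_sub_cancel_left] at h
  linarith

lemma Lap_le_smul_Lap {b : ℝ} (hb : 0 < b) (t t' : ℝ) :
    Lap t b ≤ ENNReal.ofReal (exp (|t - t'| / b)) • Lap t' b := by
  rw [Lap, Lap, ← withDensity_smul' _ _ ENNReal.ofReal_ne_top]
  refine withDensity_mono (Filter.Eventually.of_forall fun x => ?_)
  rw [Pi.smul_apply, smul_eq_mul, ← ENNReal.ofReal_mul (exp_nonneg _)]
  refine ENNReal.ofReal_le_ofReal ?_
  calc (2 * b)⁻¹ * exp (-|x - t| / b)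
      ≤ (2 * b)⁻¹ * (exp (|t - t'| / b) * exp (-|x - t'| / b)) := by
        gcongr
        exact exp_neg_abs_sub_div_le hb x t t'
    _ = exp (|t - t'| / b) * ((2 * b)⁻¹ * exp (-|x - t'| / b)) := by ring

theorem laplace_mechanism_privacy_general
    (Δ ε : ℝ) (hΔ : 0 < Δ) (hε : 0 < ε) (b : ℝ) (hb : b = Δ / ε)
    (t t' : ℝ) (ht : |t - t'| ≤ Δ)
    (A : Set ℝ) :
    Lap t b A ≤ ENNReal.ofReal (Real.exp ε) * Lap t' b A := by
  have hb₀ : 0 < b := hb ▸ div_pos hΔ hε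
  have hshift : |t - t'| / b ≤ ε := by
    rw [hb, div_div_eq_mul_div, div_le_iff₀ hΔ, mul_comm ε]
    exact mul_le_mul_of_nonneg_right ht hε.le
  calc Lap t b A ≤ (ENNReal.ofReal (exp (|t - t'| / b)) • Lap t' b) A :=
        Lap_le_smul_Lap hb₀ t t' A
    _ ≤ ENNReal.ofReal (exp ε) * Lap t' b A := by
        rw [Measure.smul_apply, smul_eq_mul]
        gcongr

/-- Privacy of the Laplace mechanism: with scale `b = Δ/ε`, for any two locations within
`Δ` of each other, the Laplace measures satisfy the pure `ε`-DP likelihood-ratio bound. -/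
theorem laplace_mechanism_privacy
    (Δ ε : ℝ) (hΔ : 0 < Δ) (hε : 0 < ε) (b : ℝ) (hb : b = Δ / ε)
    (t t' : ℝ) (ht : |t - t'| ≤ Δ)
    (A : Set ℝ) (hA : MeasurableSet A) :
    Lap t b A ≤ ENNReal.ofReal (Real.exp ε) * Lap t' b A :=
  laplace_mechanism_privacy_general Δ ε hΔ hε b hb t t' ht A
end
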